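/- Let X be a set with a ternary majority operation m (satisfying m(x,x,y) = m(x,y,x) = m(y,x,x) = x). Then the Trapezoid Lemma holds for congruences on X: if R, S, T are congruences with R ∩ S ≤ T, then R ∩ (S ∘ T ∘ S) ≤ T. -/

import Mathlib

/-! The elements `a = m x u v` and `b = m y u v` close the trapezoid: `a` is `R`- and
`S`-related to `u`, and `b` to `v`, by the majority laws, so `u T a` and `b T v` by `R ∩ S ≤ T`;
and `a T b` because `x T y`. -/

/-- A congruence on `(X, m)` for a ternary operation `m`: an equivalence relation
compatible with `m`. -/
def IsCong3 {X : Type*} (m : X → X → X → X) (E : X → X → Prop) : Prop :=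
  Equivalence E ∧
    ∀ a a' b b' c c', E a a' → E b b' → E c c' → E (m a b c) (m a' b' c')

namespace IsCong3

variable {X : Type*} {m : X → X → X → X} {E : X → X → Prop}

theorem map_left (hE : IsCong3 m E) {a a' : X} (h : E a a') (b c : X) :
    E (m a b c) (m a' b c) :=
  hE.2 _ _ _ _ _ _ h (hE.1.refl b) (hE.1.refl c)

theorem map_mid (hE : IsCong3 m E) (a : X) {b b' : X} (h : E b b') (c : X) :
    E (m a b c) (m a b' c) :=
  hE.2 _ _ _ _ _ _ (hE.1.refl a) h (hE.1.refl c)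

theorem map_right (hE : IsCong3 m E) (a b : X) {c c' : X} (h : E c c') :
    E (m a b c) (m a b c') :=
  hE.2 _ _ _ _ _ _ (hE.1.refl a) (hE.1.refl b) h

theorem map_rel_mid_of_left (hE : IsCong3 m E) (hm : ∀ x y, m x x y = x) {a b : X}
    (h : E a b) (c : X) : E (m a b c) b := by
  simpa only [hm] using hE.map_left h b c

theorem map_rel_mid_of_right (hE : IsCong3 m E) (hm : ∀ x y, m y x x = x) (a : X) {b c : X}
    (h : E c b) : E (m a b c) b := by
  simpa only [hm] using hE.map_right a b h

theorem map_rel_right_of_left (hE : IsCong3 m E) (hm : ∀ x y, m x y x = x) {a c : X}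
    (h : E a c) (b : X) : E (m a b c) c := by
  simpa only [hm] using hE.map_left h b c

theorem map_rel_right_of_mid (hE : IsCong3 m E) (hm : ∀ x y, m y x x = x) (a : X) {b c : X}
    (h : E b c) : E (m a b c) c := by
  simpa only [hm] using hE.map_mid a h c

end IsCong3

/-- For an algebra with a majority operation `m`, the Trapezoid Lemma holds for
congruences: if `R ∩ S ≤ T`, `(x,y) ∈ T`, `(x,u) ∈ S`, `(y,v) ∈ S` and
`(u,v) ∈ R`, then `(u,v) ∈ T`. -/
theorem trapezoid_of_majority_op {X : Type*} (m : X → X → X → X)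
    (h1 : ∀ x y, m x x y = x) (h2 : ∀ x y, m x y x = x) (h3 : ∀ x y, m y x x = x)
    (R S T : X → X → Prop)
    (hR : IsCong3 m R) (hS : IsCong3 m S) (hT : IsCong3 m T)
    (hRST : ∀ a b, R a b → S a b → T a b) :
    ∀ x y u v, T x y → S x u → S y v → R u v → T u v := by
  intro x y u v hxy hxu hyv huv
  have hua : T u (m x u v) :=
    hT.1.symm <| hRST _ _ (hR.map_rel_mid_of_right h3 x (hR.1.symm huv))
      (hS.map_rel_mid_of_left h1 hxu v)
  have hab : T (m x u v) (m y u v) := hT.map_left hxy u v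
  have hbv : T (m y u v) v :=
    hRST _ _ (hR.map_rel_right_of_mid h3 y huv) (hS.map_rel_right_of_left h2 hyv u)
  exact hT.1.trans hua (hT.1.trans hab hbv)
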